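/- In a 321-avoiding indecomposable permutation with left-to-right maxima π_{i_1},…,π_{i_s}, the total number of inversions equals Σ_{j=1}^{s} (π_{i_j} − i_j). -/

import Mathlib

def inversions {n : ℕ} (π : Equiv.Perm (Fin n)) : ℕ :=
  (Finset.univ.filter fun p : Fin n × Fin n => p.1 < p.2 ∧ π p.2 < π p.1).card

def Decomposable {n : ℕ} (π : Equiv.Perm (Fin n)) : Prop :=
  ∃ j : ℕ, 0 < j ∧ j < n ∧ ∀ i : Fin n, (i : ℕ) < j → (π i : ℕ) < j

def Indecomposable {n : ℕ} (π : Equiv.Perm (Fin n)) : Prop :=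
  0 < n ∧ ¬ Decomposable π

def invTable {n : ℕ} (π : Equiv.Perm (Fin n)) (i : Fin n) : ℕ :=
  (Finset.univ.filter fun j : Fin n => i < j ∧ π j < π i).card

def Avoids123 {n : ℕ} (π : Equiv.Perm (Fin n)) : Prop :=
  ¬ ∃ i j k : Fin n, i < j ∧ j < k ∧ π i < π j ∧ π j < π k

def Avoids132 {n : ℕ} (π : Equiv.Perm (Fin n)) : Prop :=
  ¬ ∃ i j k : Fin n, i < j ∧ j < k ∧ π i < π k ∧ π k < π j

def Avoids213 {n : ℕ} (π : Equiv.Perm (Fin n)) : Prop :=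
  ¬ ∃ i j k : Fin n, i < j ∧ j < k ∧ π j < π i ∧ π i < π k

def Avoids231 {n : ℕ} (π : Equiv.Perm (Fin n)) : Prop :=
  ¬ ∃ i j k : Fin n, i < j ∧ j < k ∧ π k < π i ∧ π i < π j

def Avoids312 {n : ℕ} (π : Equiv.Perm (Fin n)) : Prop :=
  ¬ ∃ i j k : Fin n, i < j ∧ j < k ∧ π j < π k ∧ π k < π i

def Avoids321 {n : ℕ} (π : Equiv.Perm (Fin n)) : Prop :=
  ¬ ∃ i j k : Fin n, i < j ∧ j < k ∧ π k < π j ∧ π j < π i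

def LTRMax {n : ℕ} (π : Equiv.Perm (Fin n)) (k : Fin n) : Prop :=
  ∀ i : Fin n, i < k → π i < π k

def revComp {n : ℕ} (π : Equiv.Perm (Fin n)) : Equiv.Perm (Fin n) :=
  Fin.revPerm * π * Fin.revPerm

/-!
Count inversions by their left entry. In a 321-avoiding permutation only a left-to-right maximum
`π i` can be the left entry of an inversion, since an earlier larger value together with an
inversion `(i, j)` would form a 321 pattern. At a left-to-right maximum all `i` earlier entries
are among the `π i` values below `π i`, so the remaining `π i - i` of them lie to its right.
-/

open Finset

theorem card_filter_apply_lt {n : ℕ} (π : Equiv.Perm (Fin n)) (i : Fin n) :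
    #{j | π j < π i} = π i := by
  rw [← Fin.card_Iio (π i), ← card_map π.toEmbedding]
  congr 1
  ext v
  simp [mem_map_equiv]

theorem inversions_eq_sum_invTable {n : ℕ} (π : Equiv.Perm (Fin n)) :
    inversions π = ∑ i, invTable π i := by
  simp only [inversions, invTable, card_filter, Fintype.sum_prod_type]

theorem invTable_add_val_of_ltrMax {n : ℕ} {π : Equiv.Perm (Fin n)} {i : Fin n}
    (hi : LTRMax π i) : invTable π i + i = π i := by
  have left : #{j | π j < π i ∧ j < i} = i := by
    rw [← Fin.card_Iio i]
    congr 1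
    ext j
    simpa using fun hj => hi j hj
  have right : #{j | π j < π i ∧ ¬ j < i} = invTable π i := by
    rw [invTable]
    congr 1
    ext j
    simp only [mem_filter, mem_univ, true_and, not_lt, and_comm (a := π j < π i)]
    refine and_congr_left fun hj => ⟨fun h => h.lt_of_ne ?_, le_of_lt⟩
    rintro rfl
    exact hj.false
  rw [← card_filter_apply_lt π i, ← card_filter_add_card_filter_not (· < i),
    filter_filter, filter_filter, left, right, add_comm]

theorem invTable_eq_zero_of_not_ltrMax {n : ℕ} {π : Equiv.Perm (Fin n)} (hπ : Avoids321 π)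
    {i : Fin n} (hi : ¬ LTRMax π i) : invTable π i = 0 := by
  obtain ⟨i', hi'i, hle⟩ := not_forall₂.mp hi
  have hlt : π i < π i' := (not_lt.mp hle).lt_of_ne (π.injective.ne hi'i.ne')
  rw [invTable, card_eq_zero, filter_eq_empty_iff]
  rintro j - ⟨hij, hji⟩
  exact hπ ⟨i', i, j, hi'i, hij, hji, hlt⟩

theorem invTable_eq_ite {n : ℕ} {π : Equiv.Perm (Fin n)} [DecidablePred (LTRMax π)]
    (hπ : Avoids321 π) (i : Fin n) :
    invTable π i = if LTRMax π i then (π i : ℕ) - i else 0 := by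
  split_ifs with hi
  · have := invTable_add_val_of_ltrMax hi
    omega
  · exact invTable_eq_zero_of_not_ltrMax hπ hi

open scoped Classical in
theorem inversions_eq_sum_ltrmax_general (n : ℕ) (π : Equiv.Perm (Fin n))
    (h1 : Avoids321 π) :
    inversions π =
      ∑ i ∈ Finset.univ.filter (fun i : Fin n => LTRMax π i),
        ((π i : ℕ) - (i : ℕ)) := by
  rw [inversions_eq_sum_invTable, sum_filter]
  exact sum_congr rfl fun i _ => invTable_eq_ite h1 i

open scoped Classical in
/-- In a 321-avoiding indecomposable permutation, the number of inversions equals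
the sum over the left-to-right maxima of (value minus position). -/
theorem inversions_eq_sum_ltrmax (n : ℕ) (π : Equiv.Perm (Fin n))
    (h1 : Avoids321 π) (h2 : Indecomposable π) :
    inversions π =
      ∑ i ∈ Finset.univ.filter (fun i : Fin n => LTRMax π i),
        ((π i : ℕ) - (i : ℕ)) :=
  inversions_eq_sum_ltrmax_general n π h1
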